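/- arXiv:1705.10124 — 2 statements merged into one kernel-verified Lean document; each statement's English description precedes it below -/
import Mathlib

section
/- The slow potassium adaptation gate of the cortical neuron models remains in the unit interval: let τ_max > 0, define p_∞(v) = 1/(exp(−(v+35)/10) + 1) and τ_p(v) = τ_max/(3.3·exp((v+35)/20) + exp(−(v+35)/20)), let V : ℝ → ℝ be continuous, and let p : ℝ → ℝ be differentiable with p'(t) = (p_∞(V(t)) − p(t))/τ_p(V(t)) for all t ≥ 0. If p(0) ∈ [0,1], then p(t) ∈ [0,1] for all t ≥ 0. -/
open Set Real

/-!
At a boundary point of `[0, 1]` the relaxation `ṗ = (p_∞ - p) / τ_p` points strictly inward,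
because `p_∞` is a sigmoid with values in `(0, 1)` and `τ_p > 0`; a differentiable trajectory
starting in `[0, 1]` therefore can never cross the boundary.
-/

theorem le_of_deriv_neg_at_level {f : ℝ → ℝ} {t₀ b : ℝ} (hf : Differentiable ℝ f)
    (h₀ : f t₀ ≤ b) (hb : ∀ t, t₀ ≤ t → f t = b → deriv f t < 0) {t : ℝ} (ht : t₀ ≤ t) :
    f t ≤ b :=
  image_le_of_deriv_right_lt_deriv_boundary hf.continuous.continuousOn
    (fun x _ => (hf x).hasDerivAt.hasDerivWithinAt) h₀ (fun x => hasDerivAt_const x b)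
    (fun x hx hfx => hb x hx.1 hfx) (right_mem_Icc.2 ht)

theorem le_of_deriv_pos_at_level {f : ℝ → ℝ} {t₀ b : ℝ} (hf : Differentiable ℝ f)
    (h₀ : b ≤ f t₀) (hb : ∀ t, t₀ ≤ t → f t = b → 0 < deriv f t) {t : ℝ} (ht : t₀ ≤ t) :
    b ≤ f t := by
  have h := le_of_deriv_neg_at_level (f := -f) (b := -b) hf.neg (neg_le_neg h₀)
    (fun s hs hfs => by
      rw [deriv.neg, neg_neg_iff_pos]
      exact hb s hs (neg_inj.1 hfs)) ht
  exact neg_le_neg_iff.1 h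

theorem mem_Icc_of_deriv_eq_relaxation {p a τ : ℝ → ℝ} {t₀ lo hi : ℝ} (hp : Differentiable ℝ p)
    (hode : ∀ t, t₀ ≤ t → deriv p t = (a t - p t) / τ t)
    (ha : ∀ t, t₀ ≤ t → a t ∈ Ioo lo hi) (hτ : ∀ t, t₀ ≤ t → 0 < τ t)
    (h₀ : p t₀ ∈ Icc lo hi) {t : ℝ} (ht : t₀ ≤ t) : p t ∈ Icc lo hi := by
  constructor
  · refine le_of_deriv_pos_at_level hp h₀.1 (fun s hs hps => ?_) ht
    rw [hode s hs, hps]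
    exact div_pos (sub_pos.2 (ha s hs).1) (hτ s hs)
  · refine le_of_deriv_neg_at_level hp h₀.2 (fun s hs hps => ?_) ht
    rw [hode s hs, hps]
    exact div_neg_of_neg_of_pos (sub_neg.2 (ha s hs).2) (hτ s hs)

theorem one_div_exp_neg_add_one_eq_sigmoid (x : ℝ) : 1 / (exp (-x) + 1) = sigmoid x := by
  rw [sigmoid_def, one_div, add_comm]

theorem slow_potassium_gate_stays_in_unit_interval_general
    (τmax : ℝ) (hτ : 0 < τmax)
    (pinf τp : ℝ → ℝ)
    (hpinf : ∀ v, pinf v = 1 / (Real.exp (-(v + 35) / 10) + 1))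
    (hτp : ∀ v, τp v = τmax / (3.3 * Real.exp ((v + 35) / 20) + Real.exp (-(v + 35) / 20)))
    (V : ℝ → ℝ)
    (p : ℝ → ℝ) (hp : Differentiable ℝ p)
    (hode : ∀ t, 0 ≤ t → deriv p t = (pinf (V t) - p t) / τp (V t))
    (h0 : p 0 ∈ Set.Icc (0 : ℝ) 1) :
    ∀ t, 0 ≤ t → p t ∈ Set.Icc (0 : ℝ) 1 := by
  have hpinf_mem : ∀ v, pinf v ∈ Ioo 0 1 := fun v => by
    rw [hpinf, neg_div, one_div_exp_neg_add_one_eq_sigmoid]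
    exact ⟨sigmoid_pos _, sigmoid_lt_one _⟩
  have hτp_pos : ∀ v, 0 < τp v := fun v => by
    rw [hτp]
    positivity
  exact fun t ht => mem_Icc_of_deriv_eq_relaxation hp hode (fun s _ => hpinf_mem (V s))
    (fun s _ => hτp_pos (V s)) h0 ht

/-- The slow potassium adaptation gate `p` of the cortical neuron models remains in the
unit interval. -/
theorem slow_potassium_gate_stays_in_unit_interval
    (τmax : ℝ) (hτ : 0 < τmax)
    (pinf τp : ℝ → ℝ)
    (hpinf : ∀ v, pinf v = 1 / (Real.exp (-(v + 35) / 10) + 1))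
    (hτp : ∀ v, τp v = τmax / (3.3 * Real.exp ((v + 35) / 20) + Real.exp (-(v + 35) / 20)))
    (V : ℝ → ℝ) (hV : Continuous V)
    (p : ℝ → ℝ) (hp : Differentiable ℝ p)
    (hode : ∀ t, 0 ≤ t → deriv p t = (pinf (V t) - p t) / τp (V t))
    (h0 : p 0 ∈ Set.Icc (0 : ℝ) 1) :
    ∀ t, 0 ≤ t → p t ∈ Set.Icc (0 : ℝ) 1 :=
  slow_potassium_gate_stays_in_unit_interval_general τmax hτ pinf τp hpinf hτp V p hp hode h0
end

section
/- In the three-current fast-spiking neuron model without external stimulus, the membrane potential remains between the potassium and sodium reversal potentials: let C > 0, g_l > 0, g_Na ≥ 0, g_K ≥ 0 be real constants, and E_K ≤ E_l ≤ E_Na real constants. Let m, h, n : ℝ → ℝ be continuous functions with values in [0,1], and let V : ℝ → ℝ be differentiable with C·V'(t) = −g_l(V(t)−E_l) − g_Na·m(t)³h(t)(V(t)−E_Na) − g_K·n(t)⁴(V(t)−E_K) for all t ≥ 0. If V(0) ∈ [E_K, E_Na], then V(t) ∈ [E_K, E_Na] for all t ≥ 0. -/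
/-! Each current drives `V` toward its own reversal potential and `E_K ≤ E_l ≤ E_Na`, so
`V' ≤ 0` wherever `V ≥ E_Na` and `V' ≥ 0` wherever `V ≤ E_K`; a barrier argument then keeps `V`
in `[E_K, E_Na]`. -/

open Set

/- The set of times in `[t₀, t]` at which `f ≤ a` is closed, so it has a last element `s`; if
`f t > a`, then `f > a` on `(s, t]`, and the mean value theorem on `[s, t]` produces a point of
`(s, t)` where `f > a` but `deriv f > 0`. -/
theorem le_of_deriv_nonpos_where_ge {f : ℝ → ℝ} {t₀ a : ℝ} (hfc : ContinuousOn f (Ici t₀))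
    (hfd : DifferentiableOn ℝ f (Ioi t₀)) (h₀ : f t₀ ≤ a)
    (hderiv : ∀ t, t₀ < t → a ≤ f t → deriv f t ≤ 0) :
    ∀ t, t₀ ≤ t → f t ≤ a := by
  intro t ht
  by_contra! hat
  set S := Icc t₀ t ∩ f ⁻¹' Iic a
  have hS_closed : IsClosed S :=
    (hfc.mono Icc_subset_Ici_self).preimage_isClosed_of_isClosed isClosed_Icc isClosed_Iic
  have hS_bdd : BddAbove S := ⟨t, fun u hu => hu.1.2⟩
  set s := sSup S
  obtain ⟨⟨ht₀s, hst⟩, hfs⟩ : s ∈ S := hS_closed.csSup_mem ⟨t₀, ⟨le_rfl, ht⟩, h₀⟩ hS_bdd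
  replace hfs : f s ≤ a := hfs
  replace hst : s < t := hst.lt_of_ne fun hs => hat.not_ge (hs ▸ hfs)
  obtain ⟨c, ⟨hsc, hct⟩, hc⟩ := exists_deriv_eq_slope f hst
    (hfc.mono fun u hu => ht₀s.trans hu.1)
    (hfd.mono fun u hu => ht₀s.trans_lt hu.1)
  have hfc_gt : a < f c := by
    by_contra! hfc_le
    exact hsc.not_ge (le_csSup hS_bdd ⟨⟨ht₀s.trans hsc.le, hct.le⟩, hfc_le⟩)
  have hslope : 0 < (f t - f s) / (t - s) := div_pos (by linarith) (by linarith)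
  exact (hc ▸ hslope).not_ge (hderiv c (ht₀s.trans_lt hsc) hfc_gt.le)

theorem ge_of_deriv_nonneg_where_le {f : ℝ → ℝ} {t₀ a : ℝ} (hfc : ContinuousOn f (Ici t₀))
    (hfd : DifferentiableOn ℝ f (Ioi t₀)) (h₀ : a ≤ f t₀)
    (hderiv : ∀ t, t₀ < t → f t ≤ a → 0 ≤ deriv f t) :
    ∀ t, t₀ ≤ t → a ≤ f t := by
  have := le_of_deriv_nonpos_where_ge (f := -f) (a := -a) hfc.neg hfd.neg (neg_le_neg h₀)
    fun t ht hft => by simpa [deriv.neg] using hderiv t ht (neg_le_neg_iff.mp hft)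
  exact fun t ht => neg_le_neg_iff.mp (this t ht)

theorem fs_voltage_stays_between_reversal_potentials_general
    (C gl gNa gK El ENa EK : ℝ)
    (hC : 0 < C) (hgl : 0 < gl) (hgNa : 0 ≤ gNa) (hgK : 0 ≤ gK)
    (hKl : EK ≤ El) (hlNa : El ≤ ENa)
    (m h n : ℝ → ℝ)
    (hm01 : ∀ t, m t ∈ Set.Icc (0 : ℝ) 1)
    (hh01 : ∀ t, h t ∈ Set.Icc (0 : ℝ) 1)
    (hn01 : ∀ t, n t ∈ Set.Icc (0 : ℝ) 1)
    (V : ℝ → ℝ) (hV : Differentiable ℝ V)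
    (hode : ∀ t, 0 ≤ t → C * deriv V t =
      -(gl * (V t - El)) - gNa * (m t) ^ 3 * h t * (V t - ENa)
        - gK * (n t) ^ 4 * (V t - EK))
    (h0 : V 0 ∈ Set.Icc EK ENa) :
    ∀ t, 0 ≤ t → V t ∈ Set.Icc EK ENa := by
  have hgNa_t : ∀ t, 0 ≤ gNa * (m t) ^ 3 * h t := fun t =>
    mul_nonneg (mul_nonneg hgNa (pow_nonneg (hm01 t).1 3)) (hh01 t).1
  have hgK_t : ∀ t, 0 ≤ gK * (n t) ^ 4 := fun t => mul_nonneg hgK (pow_nonneg (hn01 t).1 4)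
  have hVc := hV.continuous.continuousOn (s := Ici 0)
  have hVd := hV.differentiableOn (s := Ioi 0)
  intro t ht
  constructor
  · refine ge_of_deriv_nonneg_where_le hVc hVd h0.1 (fun u hu hVu => ?_) t ht
    refine nonneg_of_mul_nonneg_right ?_ hC
    rw [hode u hu.le]
    nlinarith [hgNa_t u, hgK_t u]
  · refine le_of_deriv_nonpos_where_ge hVc hVd h0.2 (fun u hu hVu => ?_) t ht
    refine nonpos_of_mul_nonpos_right ?_ hC
    rw [hode u hu.le]
    nlinarith [hgNa_t u, hgK_t u]

/-- In the three-current fast-spiking neuron model without external stimulus, the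
membrane potential remains between the potassium and sodium reversal potentials. -/
theorem fs_voltage_stays_between_reversal_potentials
    (C gl gNa gK El ENa EK : ℝ)
    (hC : 0 < C) (hgl : 0 < gl) (hgNa : 0 ≤ gNa) (hgK : 0 ≤ gK)
    (hKl : EK ≤ El) (hlNa : El ≤ ENa)
    (m h n : ℝ → ℝ)
    (hm : Continuous m) (hh : Continuous h) (hn : Continuous n)
    (hm01 : ∀ t, m t ∈ Set.Icc (0 : ℝ) 1)
    (hh01 : ∀ t, h t ∈ Set.Icc (0 : ℝ) 1)
    (hn01 : ∀ t, n t ∈ Set.Icc (0 : ℝ) 1)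
    (V : ℝ → ℝ) (hV : Differentiable ℝ V)
    (hode : ∀ t, 0 ≤ t → C * deriv V t =
      -(gl * (V t - El)) - gNa * (m t) ^ 3 * h t * (V t - ENa)
        - gK * (n t) ^ 4 * (V t - EK))
    (h0 : V 0 ∈ Set.Icc EK ENa) :
    ∀ t, 0 ≤ t → V t ∈ Set.Icc EK ENa :=
  fs_voltage_stays_between_reversal_potentials_general C gl gNa gK El ENa EK hC hgl hgNa hgK hKl
    hlNa m h n hm01 hh01 hn01 V hV hode h0
end
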